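/- Define g_nf : ℝ² → ℝ by g_nf(x, p) = 300·x·p + 300·(1−x)·(1−p). Then the supremum over x ∈ [0,1] of the infimum over p ∈ [1/10, 9/10] of g_nf(x, p) equals 150. -/
import Mathlib


noncomputable def gNf (x p : ℝ) : ℝ :=
  300 * x * p + 300 * (1 - x) * (1 - p)

lemma inner_eq (x : ℝ) :
    sInf {w : ℝ | ∃ p ∈ Set.Icc (1/10 : ℝ) (9/10), w = gNf x p}
      = min (30 + 240 * x) (270 - 240 * x) := by
  have hlb : ∀ w ∈ {w : ℝ | ∃ p ∈ Set.Icc (1/10 : ℝ) (9/10), w = gNf x p},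
      min (30 + 240 * x) (270 - 240 * x) ≤ w := by
    rintro w ⟨p, ⟨hp1, hp2⟩, rfl⟩
    rcases le_total x (1/2) with hx | hx
    · have : min (30 + 240 * x) (270 - 240 * x) ≤ 30 + 240 * x := min_le_left _ _
      refine this.trans ?_
      unfold gNf; nlinarith
    · have : min (30 + 240 * x) (270 - 240 * x) ≤ 270 - 240 * x := min_le_right _ _
      refine this.trans ?_
      unfold gNf; nlinarith
  apply le_antisymm
  · apply csInf_le ⟨_, hlb⟩
    rcases le_total x (1/2) with hx | hx
    · refine ⟨9/10, ⟨by norm_num, le_refl _⟩, ?_⟩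
      have : min (30 + 240 * x) (270 - 240 * x) = 30 + 240 * x :=
        min_eq_left (by linarith)
      rw [this]; unfold gNf; ring
    · refine ⟨1/10, ⟨le_refl _, by norm_num⟩, ?_⟩
      have : min (30 + 240 * x) (270 - 240 * x) = 270 - 240 * x :=
        min_eq_right (by linarith)
      rw [this]; unfold gNf; ring
  · exact le_csInf ⟨gNf x (1/2), 1/2, ⟨by norm_num, by norm_num⟩, rfl⟩ hlb

theorem natureFirst_optimal_value :
    sSup {v : ℝ | ∃ x ∈ Set.Icc (0 : ℝ) 1,
        v = sInf {w : ℝ | ∃ p ∈ Set.Icc (1/10 : ℝ) (9/10), w = gNf x p}} = 150 := by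
  have hset : {v : ℝ | ∃ x ∈ Set.Icc (0 : ℝ) 1,
        v = sInf {w : ℝ | ∃ p ∈ Set.Icc (1/10 : ℝ) (9/10), w = gNf x p}}
      = {v : ℝ | ∃ x ∈ Set.Icc (0 : ℝ) 1,
        v = min (30 + 240 * x) (270 - 240 * x)} := by
    ext v
    constructor
    · rintro ⟨x, hx, rfl⟩; exact ⟨x, hx, (inner_eq x).symm ▸ rfl⟩
    · rintro ⟨x, hx, rfl⟩; exact ⟨x, hx, (inner_eq x).symm⟩
  rw [hset]
  apply le_antisymm
  · refine csSup_le ⟨150, 1/2, ⟨by norm_num, by norm_num⟩, by norm_num⟩ ?_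
    rintro v ⟨x, hx, rfl⟩
    rcases le_total x (1/2) with h | h
    · exact (min_le_left _ _).trans (by linarith)
    · exact (min_le_right _ _).trans (by linarith)
  · apply le_csSup
    · refine ⟨150, ?_⟩
      rintro v ⟨x, hx, rfl⟩
      rcases le_total x (1/2) with h | h
      · exact (min_le_left _ _).trans (by linarith)
      · exact (min_le_right _ _).trans (by linarith)
    · exact ⟨1/2, ⟨by norm_num, by norm_num⟩, by norm_num⟩
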